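/- Let d ≥ 1 and T > 0. Let H₀, H₁ be Hermitian d×d complex matrices, let f : ℝ → ℝ be continuous, and let D be a linear superoperator on d×d complex matrices. Define L_t(A) = −i((H₀ + f(t)·H₁)·A − A·(H₀ + f(t)·H₁)) + D(A) and L(A) = −i(H₀·A − A·H₀) + D(A). Let ρ : ℝ → Matrix (Fin d) (Fin d) ℂ be differentiable with ρ'(t) = L_t(ρ(t)) and ‖ρ(t)‖₁ = 1 for all t ∈ [0,T], and suppose ρ₀ = ρ(0) commutes with H₁. If K > 0 is a constant satisfying ‖L(A)‖₂ ≤ K·‖A‖₂ for all matrices A, where ‖A‖₂ = √(Tr(AᴴA)) is the Frobenius (Hilbert–Schmidt) norm, then T ≥ ‖ρ(T) − ρ₀‖₁ / (√d · K). -/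

import Mathlib

/-!
Pass to the rotating frame of the drive: with `g = ∫₀ᵗ f` and `U_t = exp (-i g(t) H₁)`, the state
`σ_t = U_t⋆ ρ_t U_t` satisfies `σ_t' = U_t⋆ L(ρ_t) U_t`, since the derivative of the frame cancels
the drive term `-i f(t) [H₁, ρ_t]` exactly. The Frobenius norm is unitarily invariant, so
`‖σ_t'‖₂ ≤ K ‖ρ_t‖₂ ≤ K ‖ρ_t‖₁ = K`, and the mean value inequality gives `‖σ_T - σ_0‖₂ ≤ K T`.
Because `ρ₀` commutes with `H₁` it is fixed by the frame, so `‖ρ_T - ρ₀‖₂ = ‖σ_T - σ_0‖₂`, and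
`‖·‖₁ ≤ √d ‖·‖₂` concludes.
-/

open Matrix
open scoped ComplexOrder

/- Matrices are equipped with the Frobenius norm so that curves of matrices can be
differentiated; the statement itself is phrased via the trace and Frobenius norms
defined below. -/
attribute [local instance] Matrix.frobeniusNormedAddCommGroup Matrix.frobeniusNormedSpace

/-- Trace norm (Schatten 1-norm): `‖A‖₁ = Tr √(Aᴴ A)`. -/
noncomputable def posSemidefSqrtOld {d : ℕ} {B : Matrix (Fin d) (Fin d) ℂ} (hB : B.PosSemidef) :
    Matrix (Fin d) (Fin d) ℂ :=
  hB.1.eigenvectorUnitary.1 * diagonal (fun i => ((Real.sqrt (hB.1.eigenvalues i) : ℝ) : ℂ)) *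
    (star hB.1.eigenvectorUnitary : Matrix (Fin d) (Fin d) ℂ)

noncomputable def traceNorm {d : ℕ} (A : Matrix (Fin d) (Fin d) ℂ) : ℝ :=
  ((posSemidefSqrtOld (Matrix.posSemidef_conjTranspose_mul_self A)).trace).re

/-- Frobenius (Hilbert–Schmidt) norm: `‖A‖₂ = √(Tr (Aᴴ A))`. -/
noncomputable def frobNorm {d : ℕ} (A : Matrix (Fin d) (Fin d) ℂ) : ℝ :=
  Real.sqrt ((Aᴴ * A).trace.re)

open NormedSpace

section Norms

variable {d : ℕ}

theorem frobNorm_eq_norm (A : Matrix (Fin d) (Fin d) ℂ) : frobNorm A = ‖A‖ := by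
  rw [frobNorm, frobenius_norm_def, ← Real.sqrt_eq_rpow, trace, Finset.sum_comm]
  simp [mul_apply, Complex.mul_re, Complex.sq_norm, Complex.normSq_apply]

theorem traceNorm_eq_sum_sqrt_eigenvalues (A : Matrix (Fin d) (Fin d) ℂ) :
    traceNorm A = ∑ i, √((posSemidef_conjTranspose_mul_self A).1.eigenvalues i) := by
  rw [traceNorm, posSemidefSqrtOld, trace_mul_cycle, Unitary.coe_star_mul_self, one_mul,
    trace_diagonal]
  simp

theorem frobNorm_eq_sqrt_sum_eigenvalues (A : Matrix (Fin d) (Fin d) ℂ) :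
    frobNorm A = √(∑ i, (posSemidef_conjTranspose_mul_self A).1.eigenvalues i) := by
  rw [frobNorm, (posSemidef_conjTranspose_mul_self A).1.trace_eq_sum_eigenvalues]
  simp

theorem frobNorm_le_traceNorm (A : Matrix (Fin d) (Fin d) ℂ) : frobNorm A ≤ traceNorm A := by
  rw [traceNorm_eq_sum_sqrt_eigenvalues, frobNorm_eq_sqrt_sum_eigenvalues,
    Real.sqrt_le_left (Finset.sum_nonneg fun i _ => Real.sqrt_nonneg _)]
  have hnn := (posSemidef_conjTranspose_mul_self A).eigenvalues_nonneg
  simpa only [Real.sq_sqrt (hnn _)] using Finset.sum_sq_le_sq_sum_of_nonneg (s := Finset.univ)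
    (f := fun i => √((posSemidef_conjTranspose_mul_self A).1.eigenvalues i))
    fun i _ => Real.sqrt_nonneg _

theorem traceNorm_le_sqrt_mul_frobNorm (A : Matrix (Fin d) (Fin d) ℂ) :
    traceNorm A ≤ √d * frobNorm A := by
  rw [traceNorm_eq_sum_sqrt_eigenvalues, frobNorm_eq_sqrt_sum_eigenvalues,
    ← Real.sqrt_mul (Nat.cast_nonneg d)]
  refine (le_abs_self _).trans (Real.abs_le_sqrt ?_)
  have hnn := (posSemidef_conjTranspose_mul_self A).eigenvalues_nonneg
  simpa only [Real.sq_sqrt (hnn _), Finset.card_univ, Fintype.card_fin] using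
    sq_sum_le_card_mul_sum_sq (s := Finset.univ)
      (f := fun i => √((posSemidef_conjTranspose_mul_self A).1.eigenvalues i))

theorem frobNorm_star_mul_mul_of_mem_unitary {U : Matrix (Fin d) (Fin d) ℂ} (hU : U ∈ unitary _)
    (A : Matrix (Fin d) (Fin d) ℂ) : frobNorm (star U * A * U) = frobNorm A := by
  have hconj : (star U * A * U)ᴴ * (star U * A * U) = star U * (Aᴴ * A) * U := by
    simp only [← star_eq_conjTranspose, star_mul, star_star, mul_assoc]
    rw [← mul_assoc U (star U), Unitary.mul_star_self_of_mem hU, one_mul]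
  rw [frobNorm, frobNorm, hconj, trace_mul_cycle, Unitary.mul_star_self_of_mem hU, one_mul]

end Norms

section RotatingFrame

variable {𝔸 : Type*} [NormedRing 𝔸] [NormedAlgebra ℝ 𝔸] [CompleteSpace 𝔸]

theorem hasDerivAt_exp_neg_smul_mul_mul_exp_smul {g : ℝ → ℝ} {g' : ℝ} {ρ : ℝ → 𝔸} {ρ' : 𝔸}
    {t : ℝ} (X : 𝔸) (hg : HasDerivAt g g' t) (hρ : HasDerivAt ρ ρ' t) :
    HasDerivAt (fun s => exp (-(g s • X)) * ρ s * exp (g s • X))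
      (exp (-(g t • X)) * (ρ' - g' • (X * ρ t - ρ t * X)) * exp (g t • X)) t := by
  have hU : HasDerivAt (fun s => exp (-(g s • X))) (g' • (exp (-(g t • X)) * -X)) t := by
    simpa only [Function.comp_def, smul_neg, neg_smul] using
      (hasDerivAt_exp_smul_const (-X) (g t)).scomp t hg
  have hV : HasDerivAt (fun s => exp (g s • X)) (g' • (X * exp (g t • X))) t :=
    (hasDerivAt_exp_smul_const' X (g t)).scomp t hg
  refine ((hU.mul hρ).mul hV).congr_deriv ?_
  simp only [Pi.mul_apply, mul_sub, sub_mul, add_mul, smul_sub, smul_mul_assoc, mul_smul_comm,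
    mul_neg, neg_mul, smul_neg, mul_assoc]
  abel

theorem norm_exp_conj_sub_le (X : 𝔸) {g f : ℝ → ℝ} {ρ E : ℝ → 𝔸} {K T : ℝ} (hT : 0 ≤ T)
    (hg : ∀ t, HasDerivAt g (f t) t)
    (hρ : ∀ t ∈ Set.Icc 0 T, HasDerivAt ρ (E t + f t • (X * ρ t - ρ t * X)) t)
    (hE : ∀ t ∈ Set.Icc 0 T, ‖exp (-(g t • X)) * E t * exp (g t • X)‖ ≤ K) :
    ‖exp (-(g T • X)) * ρ T * exp (g T • X) - exp (-(g 0 • X)) * ρ 0 * exp (g 0 • X)‖ ≤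
      K * T := by
  have hσ := fun t ht => hasDerivAt_exp_neg_smul_mul_mul_exp_smul X (hg t) (hρ t ht)
  simp only [add_sub_cancel_right] at hσ
  simpa using norm_image_sub_le_of_norm_deriv_le_segment'
    (fun t ht => (hσ t ht).hasDerivWithinAt) (fun t ht => hE t (Set.Ico_subset_Icc_self ht))
    T ⟨hT, le_rfl⟩

end RotatingFrame

attribute [local instance] Matrix.frobeniusNormedRing Matrix.frobeniusNormedAlgebra

theorem frobNorm_sub_le_of_hasDerivAt_add_smul_commutator {d : ℕ}
    {X : Matrix (Fin d) (Fin d) ℂ} (hX : X ∈ skewAdjoint _) {f : ℝ → ℝ} (hf : Continuous f)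
    {L : Matrix (Fin d) (Fin d) ℂ → Matrix (Fin d) (Fin d) ℂ} {ρ : ℝ → Matrix (Fin d) (Fin d) ℂ}
    {K T : ℝ} (hT : 0 ≤ T)
    (hρ : ∀ t ∈ Set.Icc 0 T, HasDerivAt ρ (L (ρ t) + f t • (X * ρ t - ρ t * X)) t)
    (hcomm : Commute (ρ 0) X) (hL : ∀ t ∈ Set.Icc 0 T, frobNorm (L (ρ t)) ≤ K) :
    frobNorm (ρ T - ρ 0) ≤ K * T := by
  obtain ⟨g, hg0, hg⟩ : ∃ g : ℝ → ℝ, g 0 = 0 ∧ ∀ t, HasDerivAt g (f t) t :=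
    ⟨fun t => ∫ s in 0..t, f s, by simp, fun t => (hf.integral_hasStrictDerivAt 0 t).hasDerivAt⟩
  have hU : ∀ t, exp (g t • X) ∈ unitary _ := fun t =>
    exp_mem_unitary_of_mem_skewAdjoint (skewAdjoint.smul_mem (g t) hX)
  have hUstar : ∀ t, exp (-(g t • X)) = star (exp (g t • X)) := fun t => by
    rw [star_exp, skewAdjoint.mem_iff.mp (skewAdjoint.smul_mem (g t) hX)]
  have hLU : ∀ t ∈ Set.Icc 0 T, ‖exp (-(g t • X)) * L (ρ t) * exp (g t • X)‖ ≤ K := by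
    intro t ht
    rw [hUstar, ← frobNorm_eq_norm, frobNorm_star_mul_mul_of_mem_unitary (hU t)]
    exact hL t ht
  have hσ : ‖exp (-(g T • X)) * ρ T * exp (g T • X) - exp (-(g 0 • X)) * ρ 0 * exp (g 0 • X)‖ ≤
      K * T := norm_exp_conj_sub_le X hT hg hρ hLU
  have hρ0 : star (exp (g T • X)) * ρ 0 * exp (g T • X) = ρ 0 := by
    rw [← hUstar]
    exact (hcomm.smul_right (g T)).exp_neg_mul_mul_exp_eq_self
  rwa [hg0, zero_smul, neg_zero, exp_zero, one_mul, mul_one, hUstar, ← hρ0, ← sub_mul,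
    ← mul_sub, ← frobNorm_eq_norm, frobNorm_star_mul_mul_of_mem_unitary (hU T)] at hσ

theorem annealing_speed_limit_two_norm_general (d : ℕ) (T : ℝ) (hT : 0 < T)
    (H₀ H₁ : Matrix (Fin d) (Fin d) ℂ) (hH₁ : H₁.IsHermitian)
    (f : ℝ → ℝ) (hf : Continuous f)
    (D : Matrix (Fin d) (Fin d) ℂ →ₗ[ℂ] Matrix (Fin d) (Fin d) ℂ)
    (ρ : ℝ → Matrix (Fin d) (Fin d) ℂ)
    (hρ : ∀ t ∈ Set.Icc (0 : ℝ) T, HasDerivAt ρ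
      ((-Complex.I) • ((H₀ + (f t : ℂ) • H₁) * ρ t - ρ t * (H₀ + (f t : ℂ) • H₁))
        + D (ρ t)) t)
    (hρnorm : ∀ t ∈ Set.Icc (0 : ℝ) T, traceNorm (ρ t) = 1)
    (hcomm : ρ 0 * H₁ = H₁ * ρ 0)
    (K : ℝ) (hK : 0 < K)
    (hKbound : ∀ A : Matrix (Fin d) (Fin d) ℂ,
      frobNorm ((-Complex.I) • (H₀ * A - A * H₀) + D A) ≤ K * frobNorm A) :
    traceNorm (ρ T - ρ 0) / (Real.sqrt d * K) ≤ T := by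
  set L : Matrix (Fin d) (Fin d) ℂ → Matrix (Fin d) (Fin d) ℂ :=
    fun A => (-Complex.I) • (H₀ * A - A * H₀) + D A
  set X : Matrix (Fin d) (Fin d) ℂ := (-Complex.I) • H₁
  have hX : X ∈ skewAdjoint _ := by
    rw [skewAdjoint.mem_iff, star_smul, star_eq_conjTranspose, hH₁.eq]
    simp [X]
  have hρ' : ∀ t ∈ Set.Icc 0 T, HasDerivAt ρ (L (ρ t) + f t • (X * ρ t - ρ t * X)) t := by
    refine fun t ht => (hρ t ht).congr_deriv ?_
    rw [← Complex.coe_smul]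
    simp only [L, X, add_mul, mul_add, smul_mul_assoc, mul_smul_comm]
    module
  have hL : ∀ t ∈ Set.Icc 0 T, frobNorm (L (ρ t)) ≤ K := fun t ht =>
    calc _ ≤ K * frobNorm (ρ t) := hKbound (ρ t)
      _ ≤ K * traceNorm (ρ t) := by gcongr; exact frobNorm_le_traceNorm _
      _ = K := by rw [hρnorm t ht, mul_one]
  have hX0 : Commute (ρ 0) X := (show Commute (ρ 0) H₁ from hcomm).smul_right _
  refine div_le_of_le_mul₀ (by positivity) hT.le ?_
  calc traceNorm (ρ T - ρ 0) ≤ √d * frobNorm (ρ T - ρ 0) := traceNorm_le_sqrt_mul_frobNorm _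
    _ ≤ √d * (K * T) := by
      gcongr; exact frobNorm_sub_le_of_hasDerivAt_add_smul_commutator hX hf hT.le hρ' hX0 hL
    _ = T * (√d * K) := by ring

/-- schedule-independent annealing speed limit via the induced 2-norm,
Eq. (12) of the paper. For `L_t(A) = −i[(H₀ + f(t)H₁), A] + D(A)` and
`L(A) = −i[H₀, A] + D(A)`: if `ρ` solves `ρ' = L_t ρ` on `[0,T]` with `‖ρ(t)‖₁ = 1`,
`ρ₀ = ρ(0)` commutes with `H₁`, and `K > 0` satisfies `‖L(A)‖₂ ≤ K‖A‖₂` for all `A`,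
then `T ≥ ‖ρ(T) − ρ₀‖₁ / (√d · K)`. -/
theorem annealing_speed_limit_two_norm (d : ℕ) (hd : 1 ≤ d) (T : ℝ) (hT : 0 < T)
    (H₀ H₁ : Matrix (Fin d) (Fin d) ℂ) (hH₀ : H₀.IsHermitian) (hH₁ : H₁.IsHermitian)
    (f : ℝ → ℝ) (hf : Continuous f)
    (D : Matrix (Fin d) (Fin d) ℂ →ₗ[ℂ] Matrix (Fin d) (Fin d) ℂ)
    (ρ : ℝ → Matrix (Fin d) (Fin d) ℂ)
    (hρ : ∀ t ∈ Set.Icc (0 : ℝ) T, HasDerivAt ρ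
      ((-Complex.I) • ((H₀ + (f t : ℂ) • H₁) * ρ t - ρ t * (H₀ + (f t : ℂ) • H₁))
        + D (ρ t)) t)
    (hρnorm : ∀ t ∈ Set.Icc (0 : ℝ) T, traceNorm (ρ t) = 1)
    (hcomm : ρ 0 * H₁ = H₁ * ρ 0)
    (K : ℝ) (hK : 0 < K)
    (hKbound : ∀ A : Matrix (Fin d) (Fin d) ℂ,
      frobNorm ((-Complex.I) • (H₀ * A - A * H₀) + D A) ≤ K * frobNorm A) :
    traceNorm (ρ T - ρ 0) / (Real.sqrt d * K) ≤ T :=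
  annealing_speed_limit_two_norm_general d T hT H₀ H₁ hH₁ f hf D ρ hρ hρnorm hcomm K hK hKbound
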